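/- arXiv:1112.2420 — 3 statements merged into one kernel-verified Lean document; each statement's English description precedes it below -/
import Mathlib

section
/- Let f : ℂ → ℂᴺ be holomorphic and nowhere vanishing, and let P(ξ) = (f(ξ)·f(ξ)†)/(f(ξ)†·f(ξ)), viewed as a smooth map ℝ² → Matrix (Fin N) (Fin N) ℂ via ξ₊ = x + iy. Then at every point P·∂₊P = 0 and ∂₋P·P = 0; consequently [∂₊P, P] = ∂₊P, [∂₋P, P] = −∂₋P, and the lowering image ∂₋P·P·∂₊P vanishes identically (Π₋P = 0). -/
open Matrix

noncomputable section

attribute [local instance] Matrix.normedAddCommGroup Matrix.normedSpace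

/-- The Wirtinger derivative `∂₊ = ½(∂/∂x − i ∂/∂y)` of a matrix-valued map on `ℝ²`. -/
def dp {N : ℕ} (P : ℝ × ℝ → Matrix (Fin N) (Fin N) ℂ) (p : ℝ × ℝ) :
    Matrix (Fin N) (Fin N) ℂ :=
  (2 : ℂ)⁻¹ • (fderiv ℝ P p (1, 0) - Complex.I • fderiv ℝ P p (0, 1))

/-- The Wirtinger derivative `∂₋ = ½(∂/∂x + i ∂/∂y)` of a matrix-valued map on `ℝ²`. -/
def dm {N : ℕ} (P : ℝ × ℝ → Matrix (Fin N) (Fin N) ℂ) (p : ℝ × ℝ) :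
    Matrix (Fin N) (Fin N) ℂ :=
  (2 : ℂ)⁻¹ • (fderiv ℝ P p (1, 0) + Complex.I • fderiv ℝ P p (0, 1))


/-- The rank-one Hermitian projector `P = (f·f†)/(f†·f)` associated to a vector-valued map
`f : ℂ → ℂᴺ`, viewed as a map on `ℝ²` via `ξ₊ = x + iy`. -/
def projOf {N : ℕ} (f : ℂ → (Fin N → ℂ)) (p : ℝ × ℝ) : Matrix (Fin N) (Fin N) ℂ :=
  (star (f ((p.1 : ℂ) + (p.2 : ℂ) * Complex.I)) ⬝ᵥ f ((p.1 : ℂ) + (p.2 : ℂ) * Complex.I))⁻¹ •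
    vecMulVec (f ((p.1 : ℂ) + (p.2 : ℂ) * Complex.I))
      (star (f ((p.1 : ℂ) + (p.2 : ℂ) * Complex.I)))

/-!
Write `u = f ∘ ξ₊`, so that `P = u u† / ‖u‖²`. Since `P u = u` and `∂₋u = 0` by holomorphy, the
Leibniz rule gives `∂₋P · u = 0`, hence `∂₋P · P = 0` because `P` factors through `u`.
Differentiating `P² = P` gives `∂₋P · P + P · ∂₋P = ∂₋P`, so `P · ∂₋P = ∂₋P`. Finally `P` is
Hermitian, so `∂₊P = (∂₋P)†`, and taking adjoints turns the two identities for `∂₋P` into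
`P · ∂₊P = 0` and `∂₊P · P = ∂₊P`.
-/

open Complex

section Wirtinger

variable {E F G : Type*} [NormedAddCommGroup E] [NormedSpace ℂ E] [NormedAddCommGroup F]
  [NormedSpace ℂ F] [NormedAddCommGroup G] [NormedSpace ℂ G]

-- `dm` is definitionally the matrix-valued case.
def wirtingerMinus (φ : ℝ × ℝ → E) (p : ℝ × ℝ) : E :=
  (2 : ℂ)⁻¹ • (fderiv ℝ φ p (1, 0) + I • fderiv ℝ φ p (0, 1))

theorem wirtingerMinus_of_bilinear (B : E →L[ℂ] F →L[ℂ] G) {φ : ℝ × ℝ → E} {ψ : ℝ × ℝ → F}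
    {p : ℝ × ℝ} (hφ : DifferentiableAt ℝ φ p) (hψ : DifferentiableAt ℝ ψ p) :
    wirtingerMinus (fun q => B (φ q) (ψ q)) p
      = B (wirtingerMinus φ p) (ψ p) + B (φ p) (wirtingerMinus ψ p) := by
  have h := (B.bilinearRestrictScalars ℝ).fderiv_of_bilinear hφ hψ
  simp only [ContinuousLinearMap.bilinearRestrictScalars_apply_apply] at h
  simp only [wirtingerMinus, h, ContinuousLinearMap.precompR_apply,
    ContinuousLinearMap.precompL_apply, ContinuousLinearMap.compL_apply,
    ContinuousLinearMap.comp_apply, ContinuousLinearMap.bilinearRestrictScalars_apply_apply,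
    _root_.add_apply, _root_.smul_apply, smul_add, map_add, map_smul]
  abel

theorem hasFDerivAt_ofReal_add_ofReal_mul_I (p : ℝ × ℝ) :
    HasFDerivAt (fun q : ℝ × ℝ => (q.1 : ℂ) + q.2 * I)
      (equivRealProdCLM.symm : ℝ × ℝ →L[ℝ] ℂ) p := by
  convert (equivRealProdCLM.symm : ℝ × ℝ →L[ℝ] ℂ).hasFDerivAt using 1
  ext q
  simp [equivRealProdCLM_symm_apply]

theorem wirtingerMinus_comp_holomorphic {f : ℂ → E} {p : ℝ × ℝ}
    (hf : DifferentiableAt ℂ f (p.1 + p.2 * I)) :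
    wirtingerMinus (fun q : ℝ × ℝ => f (q.1 + q.2 * I)) p = 0 := by
  have h : fderiv ℝ (fun q : ℝ × ℝ => f (q.1 + q.2 * I)) p
      = (fderiv ℂ f (p.1 + p.2 * I)).restrictScalars ℝ ∘L equivRealProdCLM.symm :=
    ((hf.hasFDerivAt.restrictScalars ℝ).comp p (hasFDerivAt_ofReal_add_ofReal_mul_I p)).fderiv
  have hI : fderiv ℂ f (p.1 + p.2 * I) I = I • fderiv ℂ f (p.1 + p.2 * I) 1 := by
    rw [← map_smul, smul_eq_mul, mul_one]
  simp [wirtingerMinus, h, hI, smul_smul, equivRealProdCLM_symm_apply]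

end Wirtinger

section LineProjector

variable {𝕜 n : Type*} [RCLike 𝕜] [Fintype n]

def lineProjector (v : n → 𝕜) : Matrix n n 𝕜 :=
  (star v ⬝ᵥ v)⁻¹ • vecMulVec v (star v)

theorem mul_lineProjector (A : Matrix n n 𝕜) (v : n → 𝕜) :
    A * lineProjector v = (star v ⬝ᵥ v)⁻¹ • vecMulVec (A *ᵥ v) (star v) := by
  rw [lineProjector, Matrix.mul_smul, mul_vecMulVec]

open scoped ComplexOrder in
theorem lineProjector_mulVec_self {v : n → 𝕜} (hv : v ≠ 0) : lineProjector v *ᵥ v = v := by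
  have hn : star v ⬝ᵥ v ≠ 0 := dotProduct_star_self_eq_zero.not.mpr hv
  rw [lineProjector, smul_mulVec, vecMulVec_mulVec, op_smul_eq_smul, inv_smul_smul₀ hn]

theorem lineProjector_mul_self (v : n → 𝕜) :
    lineProjector v * lineProjector v = lineProjector v := by
  rcases eq_or_ne v 0 with rfl | hv
  · simp [lineProjector]
  · rw [mul_lineProjector, lineProjector_mulVec_self hv, lineProjector]

theorem conjTranspose_lineProjector (v : n → 𝕜) : (lineProjector v)ᴴ = lineProjector v := by
  rw [lineProjector, conjTranspose_smul, star_inv₀, ← star_dotProduct, conjTranspose_vecMulVec,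
    star_star]

open scoped ComplexOrder in
theorem differentiableAt_lineProjector {v : n → 𝕜} (hv : v ≠ 0) :
    DifferentiableAt ℝ lineProjector v := by
  have hn : star v ⬝ᵥ v ≠ 0 := dotProduct_star_self_eq_zero.not.mpr hv
  have hdot : DifferentiableAt ℝ (fun w : n → 𝕜 => star w ⬝ᵥ w) v := by
    simp only [dotProduct]
    fun_prop
  have hvv : DifferentiableAt ℝ (fun w : n → 𝕜 => vecMulVec w (star w)) v :=
    ((vecMulVecBilin ℝ ℝ).toContinuousBilinearMap.hasFDerivAt_of_bilinear
      (hasFDerivAt_id v) (hasFDerivAt_id v).star).differentiableAt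
  exact (hdot.inv hn).smul hvv

end LineProjector

section WirtingerMatrix

variable {N : ℕ} {P : ℝ × ℝ → Matrix (Fin N) (Fin N) ℂ} {p : ℝ × ℝ}

theorem dm_mul_add_mul_dm_of_idempotent (hP : DifferentiableAt ℝ P p)
    (hidem : ∀ q, P q * P q = P q) : dm P p * P p + P p * dm P p = dm P p := by
  have h : dm (fun q => P q * P q) p = dm P p * P p + P p * dm P p :=
    wirtingerMinus_of_bilinear
      (LinearMap.mul ℂ (Matrix (Fin N) (Fin N) ℂ)).toContinuousBilinearMap hP hP
  simp only [hidem] at h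
  exact h.symm

theorem dm_mulVec_eq_zero_of_mulVec_eq_self (hP : DifferentiableAt ℝ P p)
    {u : ℝ × ℝ → Fin N → ℂ} (hu : DifferentiableAt ℝ u p) (hu_holo : wirtingerMinus u p = 0)
    (hfix : ∀ q, P q *ᵥ u q = u q) : dm P p *ᵥ u p = 0 := by
  have h := wirtingerMinus_of_bilinear (mulVecBilin ℂ ℂ).toContinuousBilinearMap hP hu
  simp only [LinearMap.toContinuousBilinearMap_apply, mulVecBilin_apply, hfix, hu_holo,
    mulVec_zero, add_zero] at h
  exact h.symm

theorem dp_eq_conjTranspose_dm (hherm : ∀ q, (P q)ᴴ = P q) : dp P p = (dm P p)ᴴ := by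
  have hD : ∀ v, (fderiv ℝ P p v)ᴴ = fderiv ℝ P p v := by
    have h := fderiv_star (𝕜 := ℝ) (f := P) (x := p)
    simp only [star_eq_conjTranspose, hherm] at h
    exact fun v => (congrArg (· v) h).symm
  rw [dp, dm, conjTranspose_smul, conjTranspose_add, conjTranspose_smul, hD, hD]
  simp [sub_eq_add_neg]

end WirtingerMatrix

section HolomorphicProjector

theorem projOf_eq_lineProjector {N : ℕ} (f : ℂ → Fin N → ℂ) :
    projOf f = fun q => lineProjector (f (q.1 + q.2 * I)) := rfl

variable {N : ℕ} {f : ℂ → Fin N → ℂ}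

theorem differentiableAt_comp_ofReal_add_ofReal_mul_I (hf : Differentiable ℂ f) (p : ℝ × ℝ) :
    DifferentiableAt ℝ (fun q : ℝ × ℝ => f (q.1 + q.2 * I)) p :=
  ((hf _).restrictScalars ℝ).comp p (hasFDerivAt_ofReal_add_ofReal_mul_I p).differentiableAt

theorem differentiableAt_projOf (hf : Differentiable ℂ f) (hf0 : ∀ ξ, f ξ ≠ 0) (p : ℝ × ℝ) :
    DifferentiableAt ℝ (projOf f) p := by
  rw [projOf_eq_lineProjector]
  exact (differentiableAt_lineProjector (hf0 _)).comp p
    (differentiableAt_comp_ofReal_add_ofReal_mul_I hf p)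

theorem dm_projOf_mul_projOf (hf : Differentiable ℂ f) (hf0 : ∀ ξ, f ξ ≠ 0) (p : ℝ × ℝ) :
    dm (projOf f) p * projOf f p = 0 := by
  have hker := dm_mulVec_eq_zero_of_mulVec_eq_self (differentiableAt_projOf hf hf0 p)
    (differentiableAt_comp_ofReal_add_ofReal_mul_I hf p) (wirtingerMinus_comp_holomorphic (hf _))
    (fun q => lineProjector_mulVec_self (hf0 _))
  rw [projOf_eq_lineProjector f, mul_lineProjector, ← projOf_eq_lineProjector, hker,
    zero_vecMulVec, smul_zero]

end HolomorphicProjector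

/-- For the projector `P` associated to a nowhere-vanishing holomorphic `f : ℂ → ℂᴺ`,
`P·∂₊P = 0` and `∂₋P·P = 0`; consequently `[∂₊P, P] = ∂₊P`, `[∂₋P, P] = −∂₋P`, and the
lowering image `∂₋P·P·∂₊P` vanishes identically (`Π₋P = 0`). -/
theorem holomorphic_projector_identities {N : ℕ} (f : ℂ → (Fin N → ℂ))
    (hf : Differentiable ℂ f) (hf0 : ∀ ξ, f ξ ≠ 0)
    (P : ℝ × ℝ → Matrix (Fin N) (Fin N) ℂ) (hPdef : P = projOf f) :
    ∀ p, P p * dp P p = 0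
      ∧ dm P p * P p = 0
      ∧ dp P p * P p - P p * dp P p = dp P p
      ∧ dm P p * P p - P p * dm P p = -dm P p
      ∧ dm P p * P p * dp P p = 0 := by
  subst hPdef
  intro p
  have hherm : ∀ q, (projOf f q)ᴴ = projOf f q := fun q => conjTranspose_lineProjector _
  have hdp : dp (projOf f) p = (dm (projOf f) p)ᴴ := dp_eq_conjTranspose_dm hherm
  have h_dm_P := dm_projOf_mul_projOf hf hf0 p
  have h_P_dm : projOf f p * dm (projOf f) p = dm (projOf f) p := by
    simpa only [h_dm_P, zero_add] using dm_mul_add_mul_dm_of_idempotent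
      (differentiableAt_projOf hf hf0 p) (fun q => lineProjector_mul_self _)
  have h_P_dp : projOf f p * dp (projOf f) p = 0 := by
    rw [hdp, ← hherm p, ← conjTranspose_mul, h_dm_P, conjTranspose_zero]
  have h_dp_P : dp (projOf f) p * projOf f p = dp (projOf f) p := by
    rw [hdp, ← hherm p, ← conjTranspose_mul, h_P_dm]
  exact ⟨h_P_dp, h_dm_P, by rw [h_dp_P, h_P_dp, sub_zero], by rw [h_dm_P, h_P_dm, zero_sub],
    by rw [h_dm_P, Matrix.zero_mul]⟩
end
end

section
/- Let P : ℝ² → Matrix (Fin N) (Fin N) ℂ be a continuously differentiable rank-one Hermitian projector (P² = P, Pᴴ = P, tr P = 1 everywhere), and suppose at a given point t := trace(∂₊P·P·∂₋P) ≠ 0. Then Π₊P := (∂₊P·P·∂₋P)/t satisfies at that point: (Π₊P)² = Π₊P, (Π₊P)ᴴ = Π₊P, trace(Π₊P) = 1, and P·(Π₊P) = (Π₊P)·P = 0. That is, the raising operator produces a rank-one Hermitian projector orthogonal to P. -/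
/-! Differentiating `P * P = P` gives `∂P = P ∂P + ∂P P`, hence `P ∂P P = 0`, and differentiating
`Pᴴ = P` gives `(∂₊P)ᴴ = ∂₋P`. A rank-one projector satisfies `P X P = tr(P X) • P`, so
`M = ∂₊P P ∂₋P` satisfies `M * M = tr(M) • M`; it is Hermitian, and `P M = M P = 0` because
`P ∂±P P = 0`. Dividing by `t = tr M` gives the projector. -/

open Matrix

noncomputable section

attribute [local instance] Matrix.normedAddCommGroup Matrix.normedSpace

section RankOne

variable {K V : Type*} [Field K] [AddCommGroup V] [Module K V]

theorem LinearMap.exists_mul_mul_eq_smul_of_finrank_range_eq_one {e : Module.End K V}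
    (he : Module.finrank K (range e) = 1) (g : Module.End K V) :
    ∃ c : K, e * g * e = c • e := by
  obtain ⟨c, hc, -⟩ := existsUnique_eq_smul_id_of_finrank_eq_one he
    ((e * g).restrict (p := range e) (q := range e) fun x _ => mem_range_self e (g x))
  refine ⟨c, ext fun x => ?_⟩
  simpa using congrArg Subtype.val (LinearMap.congr_fun hc ⟨e x, mem_range_self e x⟩)

/-- An idempotent of trace one has one-dimensional range, so it cuts every endomorphism down to
a multiple of itself; taking traces identifies the multiple. -/
theorem IsIdempotentElem.mul_mul_eq_trace_smul [CharZero K] [FiniteDimensional K V]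
    {e : Module.End K V} (he : IsIdempotentElem e) (htr : LinearMap.trace K V e = 1)
    (g : Module.End K V) : e * g * e = LinearMap.trace K V (e * g) • e := by
  have hrank : Module.finrank K (LinearMap.range e) = 1 := by
    exact_mod_cast (LinearMap.IsIdempotentElem.isProj_range e he).trace.symm.trans htr
  obtain ⟨c, hc⟩ := LinearMap.exists_mul_mul_eq_smul_of_finrank_range_eq_one hrank g
  have hcg : LinearMap.trace K V (e * g) = c := calc
    LinearMap.trace K V (e * g) = LinearMap.trace K V (e * g * e) := by
      rw [LinearMap.trace_mul_comm K (e * g) e, ← mul_assoc, he.eq]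
    _ = c := by rw [hc, map_smul, htr, smul_eq_mul, mul_one]
  rw [hcg, hc]

variable {n : Type*} [Fintype n] [DecidableEq n] [CharZero K]

theorem Matrix.mul_mul_eq_trace_smul_of_isIdempotentElem {Q : Matrix n n K}
    (hQ : IsIdempotentElem Q) (htr : Q.trace = 1) (X : Matrix n n K) :
    Q * X * Q = (Q * X).trace • Q := by
  have htrace (A : Matrix n n K) : LinearMap.trace K _ (toLinAlgEquiv' A) = A.trace :=
    trace_toLin'_eq A
  apply toLinAlgEquiv'.injective
  simpa [← map_mul, htrace] using
    (hQ.map toLinAlgEquiv').mul_mul_eq_trace_smul (by rwa [htrace]) (toLinAlgEquiv' X)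

theorem Matrix.mul_mul_mul_self_eq_trace_smul {Q : Matrix n n K} (hQ : IsIdempotentElem Q)
    (htr : Q.trace = 1) (A B : Matrix n n K) :
    A * Q * B * (A * Q * B) = (A * Q * B).trace • (A * Q * B) := calc
  A * Q * B * (A * Q * B) = A * (Q * (B * A) * Q) * B := by simp only [mul_assoc]
  _ = (Q * (B * A)).trace • (A * Q * B) := by
    rw [mul_mul_eq_trace_smul_of_isIdempotentElem hQ htr, mul_smul_comm, smul_mul_assoc]
  _ = (A * Q * B).trace • (A * Q * B) := by
    rw [trace_mul_comm, trace_mul_comm (A * Q), mul_assoc]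

end RankOne

theorem isIdempotentElem_inv_smul_of_mul_self_eq_smul {K A : Type*} [Field K] [Ring A]
    [Algebra K A] {t : K} {M : A} (hM : M * M = t • M) (ht : t ≠ 0) :
    IsIdempotentElem (t⁻¹ • M) := by
  rw [IsIdempotentElem, smul_mul_smul_comm, hM, smul_smul, mul_assoc, inv_mul_cancel₀ ht,
    mul_one]

theorem IsIdempotentElem.mul_mul_eq_zero_of_eq_mul_add_mul {R : Type*} [NonUnitalRing R]
    {e x : R} (he : IsIdempotentElem e) (hx : x = e * x + x * e) : e * x * e = 0 := by
  have h : e * x = e * x + e * x * e := by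
    conv_lhs => rw [hx]
    rw [mul_add, ← mul_assoc, he.eq, mul_assoc]
  exact left_eq_add.mp h

theorem Matrix.IsHermitian.inv_trace_smul {n 𝕜 : Type*} [Fintype n] [Field 𝕜] [StarRing 𝕜]
    {M : Matrix n n 𝕜} (hM : M.IsHermitian) : (M.trace⁻¹ • M).IsHermitian := by
  rw [IsHermitian, conjTranspose_smul, hM.eq, star_inv₀, ← trace_conjTranspose, hM.eq]

section Derivatives

variable {n 𝕜 E : Type*} [Fintype n] [RCLike 𝕜] [NormedAddCommGroup E] [NormedSpace ℝ E]

/-- The sup norm on matrices is not submultiplicative, so `ContinuousLinearMap.mul` is not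
available. -/
def Matrix.mulCLM : Matrix n n 𝕜 →L[ℝ] Matrix n n 𝕜 →L[ℝ] Matrix n n 𝕜 :=
  ((LinearMap.toContinuousLinearMap : (Matrix n n 𝕜 →ₗ[ℝ] Matrix n n 𝕜) ≃ₗ[ℝ] _).toLinearMap ∘ₗ
    LinearMap.mk₂ ℝ (· * ·) add_mul smul_mul_assoc mul_add mul_smul_comm).toContinuousLinearMap

theorem fderiv_apply_eq_mul_add_mul_of_mul_self_eq {f : E → Matrix n n 𝕜} {p : E}
    (hf : DifferentiableAt ℝ f p) (hidem : ∀ x, f x * f x = f x) (v : E) :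
    fderiv ℝ f p v = f p * fderiv ℝ f p v + fderiv ℝ f p v * f p := by
  have h := Matrix.mulCLM.hasFDerivAt_of_bilinear hf.hasFDerivAt hf.hasFDerivAt
  change HasFDerivAt (fun y => f y * f y) _ p at h
  simp only [hidem] at h
  exact congrArg (· v) (hf.hasFDerivAt.unique h)

theorem mul_fderiv_apply_mul_eq_zero_of_mul_self_eq {f : E → Matrix n n 𝕜} {p : E}
    (hf : DifferentiableAt ℝ f p) (hidem : ∀ x, f x * f x = f x) (v : E) :
    f p * fderiv ℝ f p v * f p = 0 :=
  IsIdempotentElem.mul_mul_eq_zero_of_eq_mul_add_mul (hidem p)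
    (fderiv_apply_eq_mul_add_mul_of_mul_self_eq hf hidem v)

theorem conjTranspose_fderiv_apply {f : E → Matrix n n 𝕜} (hf : ∀ x, (f x)ᴴ = f x) (p v : E) :
    (fderiv ℝ f p v)ᴴ = fderiv ℝ f p v := by
  have h := fderiv_star (𝕜 := ℝ) (f := f) (x := p)
  rw [show (fun y => star (f y)) = f from funext hf] at h
  exact (congrArg (· v) h).symm

end Derivatives

section Wirtinger

variable {N : ℕ} {P : ℝ × ℝ → Matrix (Fin N) (Fin N) ℂ} {p : ℝ × ℝ}

theorem conjTranspose_dp (hP : ∀ x, (P x)ᴴ = P x) : (dp P p)ᴴ = dm P p := by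
  simp [dp, dm, conjTranspose_fderiv_apply hP, sub_eq_add_neg]

theorem mul_dp_mul_eq_zero (hP : DifferentiableAt ℝ P p) (hproj : ∀ x, P x * P x = P x) :
    P p * dp P p * P p = 0 := by
  simp [dp, mul_sub, sub_mul, mul_fderiv_apply_mul_eq_zero_of_mul_self_eq hP hproj]

theorem mul_dm_mul_eq_zero (hP : DifferentiableAt ℝ P p) (hproj : ∀ x, P x * P x = P x) :
    P p * dm P p * P p = 0 := by
  simp [dm, mul_add, add_mul, mul_fderiv_apply_mul_eq_zero_of_mul_self_eq hP hproj]

end Wirtinger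

/-- For a `C¹` rank-one Hermitian projector `P` and a point where
`t = trace(∂₊P·P·∂₋P) ≠ 0`, the raising operator `Π₊P = (∂₊P·P·∂₋P)/t` is a rank-one
Hermitian projector orthogonal to `P`. -/
theorem raising_operator_projector {N : ℕ} (P : ℝ × ℝ → Matrix (Fin N) (Fin N) ℂ)
    (hP : ContDiff ℝ 1 P)
    (hproj : ∀ p, P p * P p = P p)
    (hherm : ∀ p, (P p)ᴴ = P p)
    (htr : ∀ p, (P p).trace = 1)
    (p : ℝ × ℝ)
    (t : ℂ) (ht : t = (dp P p * P p * dm P p).trace) (ht0 : t ≠ 0)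
    (PiP : Matrix (Fin N) (Fin N) ℂ) (hPiP : PiP = t⁻¹ • (dp P p * P p * dm P p)) :
    PiP * PiP = PiP ∧ PiPᴴ = PiP ∧ PiP.trace = 1 ∧ P p * PiP = 0 ∧ PiP * P p = 0 := by
  have hdiff : DifferentiableAt ℝ P p := hP.differentiable one_ne_zero p
  set M := dp P p * P p * dm P p
  have hMH : M.IsHermitian := by
    simpa only [M, ← conjTranspose_dp hherm] using isHermitian_mul_mul_conjTranspose _ (hherm p)
  have hMM : M * M = t • M := ht ▸ mul_mul_mul_self_eq_trace_smul (hproj p) (htr p) _ _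
  have hPM : P p * M = 0 := by
    simp only [M, ← mul_assoc, mul_dp_mul_eq_zero hdiff hproj, zero_mul]
  have hMP : M * P p = 0 := by
    simp only [M, mul_assoc, mul_dm_mul_eq_zero hdiff hproj, mul_zero]
  subst hPiP ht
  refine ⟨(isIdempotentElem_inv_smul_of_mul_self_eq_smul hMM ht0).eq, hMH.inv_trace_smul.eq, ?_,
    by rw [mul_smul_comm, hPM, smul_zero], by rw [smul_mul_assoc, hMP, smul_zero]⟩
  rw [trace_smul, smul_eq_mul, inv_mul_cancel₀ ht0]
end
end

section
/- Let U¹, U², A, B : ℝ² → Matrix (Fin N) (Fin N) ℂ be continuously differentiable, and let Φ : ℝ² → Matrix (Fin N) (Fin N) ℂ be continuously differentiable and everywhere invertible with ∂Φ/∂ξ₁ = U¹·Φ and ∂Φ/∂ξ₂ = U²·Φ. If A and B satisfy the Gauss–Mainardi–Codazzi equations ∂A/∂ξ₂ − ∂B/∂ξ₁ + [A, U²] + [U¹, B] = 0, then the matrix-valued 1-form (Φ⁻¹·A·Φ) dξ₁ + (Φ⁻¹·B·Φ) dξ₂ is closed, i.e. ∂(Φ⁻¹·A·Φ)/∂ξ₂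 = ∂(Φ⁻¹·B·Φ)/∂ξ₁; consequently there exists F : ℝ² → Matrix (Fin N) (Fin N) ℂ with ∂F/∂ξ₁ = Φ⁻¹·A·Φ and ∂F/∂ξ₂ = Φ⁻¹·B·Φ (the Fokas–Gel'fand immersion). -/
/-!
Differentiating `Φ⁻¹ X Φ` in a direction `v` along which `∂ᵥΦ = U Φ` gives
`Φ⁻¹ (∂ᵥX + [X, U]) Φ`. Hence `∂₂(Φ⁻¹AΦ) = Φ⁻¹(∂₂A + [A, U²])Φ` and
`∂₁(Φ⁻¹BΦ) = Φ⁻¹(∂₁B + [B, U¹])Φ`, and the Gauss–Mainardi–Codazzi equation says precisely that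
these agree; call the common value `K`. A form `G dξ₁ + H dξ₂` on the plane with continuous
coefficients and `∂₂G = K = ∂₁H` continuous has the primitive
`F(x, y) = ∫₀ˣ G(t, 0) dt + ∫₀ʸ H(0, s) ds + ∫₀ˣ ∫₀ʸ K(t, s) ds dt`: its partial derivatives are
`G` and `H` by the fundamental theorem of calculus (and Fubini for the second one), and
continuous partial derivatives make `F` differentiable.
-/

open Matrix ContinuousLinearMap Set intervalIntegral

noncomputable section

attribute [local instance] Matrix.normedAddCommGroup Matrix.normedSpace

theorem map_ringInverse {M₀ N₀ F : Type*} [MonoidWithZero M₀] [MonoidWithZero N₀]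
    [EquivLike F M₀ N₀] [MulEquivClass F M₀ N₀] (e : F) (a : M₀) :
    e (Ring.inverse a) = Ring.inverse (e a) := by
  by_cases ha : IsUnit a
  · obtain ⟨u, rfl⟩ := ha
    rw [Ring.inverse_unit, show e u = (Units.map (e : M₀ →* N₀) u : N₀) from rfl,
      Ring.inverse_unit]
    rfl
  · rw [Ring.inverse_non_unit a ha, Ring.inverse_non_unit _ (by simpa using ha), map_zero]

section MatrixCalculus

variable {n 𝕜 E : Type*} [Fintype n] [DecidableEq n] [RCLike 𝕜]
  [NormedAddCommGroup E] [NormedSpace ℝ E] {f g X : E → Matrix n n 𝕜}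
  {f' g' : E →L[ℝ] Matrix n n 𝕜} {x : E}

theorem HasFDerivAt.matrix_mul (hf : HasFDerivAt f f' x) (hg : HasFDerivAt g g' x) :
    HasFDerivAt (fun y => f y * g y)
      ((LinearMap.mulLeft ℝ (f x)).toContinuousLinearMap.comp g'
        + (LinearMap.mulRight ℝ (g x)).toContinuousLinearMap.comp f') x := by
  refine ((LinearMap.mul ℝ (Matrix n n 𝕜)).toContinuousBilinearMap.hasFDerivAt_of_bilinear
    hf hg).congr_fderiv ?_
  ext1 v
  rfl

/- The sup norm on matrices is not submultiplicative, so the derivative of inversion is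
transported from the Banach algebra of operators on `EuclideanSpace 𝕜 n`. -/
theorem HasFDerivAt.matrix_inv (hf : HasFDerivAt f f' x) (hx : IsUnit (f x)) :
    HasFDerivAt (fun y => (f y)⁻¹)
      (-(LinearMap.mulLeftRight ℝ ((f x)⁻¹, (f x)⁻¹)).toContinuousLinearMap.comp f') x := by
  let φ := toEuclideanCLM (n := n) (𝕜 := 𝕜)
  let e : Matrix n n 𝕜 ≃L[ℝ] (EuclideanSpace 𝕜 n →L[𝕜] EuclideanSpace 𝕜 n) :=
    (φ.toAlgEquiv.toLinearEquiv.restrictScalars ℝ).toContinuousLinearEquiv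
  have he : ∀ A, e A = φ A := fun _ => rfl
  have he' : ∀ A, e.symm A = φ.symm A := fun _ => rfl
  have hinv : (fun y => (f y)⁻¹) = e.symm ∘ Ring.inverse ∘ e ∘ f := by
    funext y
    simp [he, he', nonsing_inv_eq_ringInverse, ← map_ringInverse]
  obtain ⟨u, hu⟩ := hx.map φ
  have hu' : (↑u⁻¹ : EuclideanSpace 𝕜 n →L[𝕜] EuclideanSpace 𝕜 n) = φ (f x)⁻¹ := by
    rw [← Ring.inverse_unit, hu, nonsing_inv_eq_ringInverse, map_ringInverse]
  have hD := (hasFDerivAt_ringInverse (𝕜 := 𝕜) u).restrictScalars ℝ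
  rw [hu, ← he] at hD
  refine (hinv ▸ e.symm.hasFDerivAt.comp x (hD.comp x (e.hasFDerivAt.comp x hf))).congr_fderiv
    ?_
  ext1 v
  change e.symm (-(↑u⁻¹ * e (f' v) * ↑u⁻¹)) = _
  rw [hu', he, he', ← map_mul, ← map_mul, ← map_neg, StarAlgEquiv.symm_apply_apply]
  rfl

theorem DifferentiableAt.matrix_mul (hf : DifferentiableAt ℝ f x)
    (hg : DifferentiableAt ℝ g x) :
    DifferentiableAt ℝ (fun y => f y * g y) x :=
  (hf.hasFDerivAt.matrix_mul hg.hasFDerivAt).differentiableAt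

theorem DifferentiableAt.matrix_inv (hf : DifferentiableAt ℝ f x) (hx : IsUnit (f x)) :
    DifferentiableAt ℝ (fun y => (f y)⁻¹) x :=
  (hf.hasFDerivAt.matrix_inv hx).differentiableAt

theorem fderiv_matrix_mul_apply (hf : DifferentiableAt ℝ f x) (hg : DifferentiableAt ℝ g x)
    (v : E) :
    fderiv ℝ (fun y => f y * g y) x v = f x * fderiv ℝ g x v + fderiv ℝ f x v * g x := by
  rw [(hf.hasFDerivAt.matrix_mul hg.hasFDerivAt).fderiv]
  rfl

theorem fderiv_matrix_inv_apply (hf : DifferentiableAt ℝ f x) (hx : IsUnit (f x)) (v : E) :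
    fderiv ℝ (fun y => (f y)⁻¹) x v = -((f x)⁻¹ * fderiv ℝ f x v * (f x)⁻¹) := by
  rw [(hf.hasFDerivAt.matrix_inv hx).fderiv]
  rfl

theorem fderiv_matrix_conj_apply (hf : DifferentiableAt ℝ f x) (hx : IsUnit (f x))
    (hX : DifferentiableAt ℝ X x) {v : E} {U : Matrix n n 𝕜} (hU : fderiv ℝ f x v = U * f x) :
    fderiv ℝ (fun y => (f y)⁻¹ * X y * f y) x v
      = (f x)⁻¹ * (fderiv ℝ X x v + (X x * U - U * X x)) * f x := by
  have hfX := (hf.matrix_inv hx).matrix_mul hX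
  have hff : f x * (f x)⁻¹ = 1 := mul_nonsing_inv _ ((isUnit_iff_isUnit_det _).1 hx)
  rw [fderiv_matrix_mul_apply hfX hf, fderiv_matrix_mul_apply (hf.matrix_inv hx) hX,
    fderiv_matrix_inv_apply hf hx, hU]
  simp only [mul_add, add_mul, mul_sub, sub_mul, neg_mul, mul_assoc, hff, mul_one]
  abel

end MatrixCalculus

section Primitive

variable {E : Type*} [NormedAddCommGroup E] [NormedSpace ℝ E] {K : ℝ × ℝ → E}

theorem DifferentiableAt.hasDerivAt_comp_prodMk_left {f : ℝ × ℝ → E} {x y : ℝ}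
    (hf : DifferentiableAt ℝ f (x, y)) :
    HasDerivAt (fun t => f (t, y)) (fderiv ℝ f (x, y) (1, 0)) x :=
  (hf.hasFDerivAt.comp x (hasFDerivAt_prodMk_left (𝕜 := ℝ) x y)).hasDerivAt

theorem DifferentiableAt.hasDerivAt_comp_prodMk_right {f : ℝ × ℝ → E} {x y : ℝ}
    (hf : DifferentiableAt ℝ f (x, y)) :
    HasDerivAt (fun s => f (x, s)) (fderiv ℝ f (x, y) (0, 1)) y :=
  (hf.hasFDerivAt.comp y (hasFDerivAt_prodMk_right x y)).hasDerivAt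

theorem hasDerivAt_integral_integral [CompleteSpace E] (hK : Continuous K) (a b x y : ℝ) :
    HasDerivAt (fun x => ∫ t in a..x, ∫ s in b..y, K (t, s)) (∫ s in b..y, K (x, s)) x :=
  (continuous_parametric_intervalIntegral_of_continuous' (f := fun t s => K (t, s)) hK b y
    |>.integral_hasStrictDerivAt a x).hasDerivAt

theorem intervalIntegral_intervalIntegral_swap_of_continuous (hK : Continuous K)
    (a b c d : ℝ) :
    ∫ t in a..b, ∫ s in c..d, K (t, s) = ∫ s in c..d, ∫ t in a..b, K (t, s) :=
  MeasureTheory.intervalIntegral_intervalIntegral_swap <|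
    (hK.continuousOn.integrableOn_compact (isCompact_uIcc.prod isCompact_uIcc)).mono_set
      (prod_mono uIoc_subset_uIcc uIoc_subset_uIcc)

theorem exists_hasFDerivAt_of_mixed_partials [CompleteSpace E] {G H : ℝ × ℝ → E}
    (hG : Continuous G) (hH : Continuous H) (hK : Continuous K)
    (hGK : ∀ x y, HasDerivAt (fun s => G (x, s)) (K (x, y)) y)
    (hHK : ∀ x y, HasDerivAt (fun t => H (t, y)) (K (x, y)) x) :
    ∃ F : ℝ × ℝ → E, ∀ p,
      HasFDerivAt F ((toSpanSingleton ℝ (G p)).coprod (toSpanSingleton ℝ (H p))) p := by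
  let F : ℝ × ℝ → E := fun p =>
    (∫ t in 0..p.1, G (t, 0)) + (∫ s in 0..p.2, H (0, s))
      + ∫ t in 0..p.1, ∫ s in 0..p.2, K (t, s)
  have hFx : ∀ x y, HasDerivAt (fun x => F (x, y)) (G (x, y)) x := by
    intro x y
    have hG₀ : HasDerivAt (fun x => ∫ t in 0..x, G (t, 0)) (G (x, 0)) x :=
      ((hG.comp (continuous_id.prodMk continuous_const)).integral_hasStrictDerivAt 0 x).hasDerivAt
    have hKG : ∫ s in 0..y, K (x, s) = G (x, y) - G (x, 0) :=
      integral_eq_sub_of_hasDerivAt (fun s _ => hGK x s)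
        ((hK.comp (continuous_const.prodMk continuous_id)).intervalIntegrable ..)
    have h := (hG₀.add_const (∫ s in 0..y, H (0, s))).add (hasDerivAt_integral_integral hK 0 0 x y)
    rwa [hKG, add_sub_cancel] at h
  have hFy : ∀ x y, HasDerivAt (fun y => F (x, y)) (H (x, y)) y := by
    intro x y
    have hH₀ : HasDerivAt (fun y => ∫ s in 0..y, H (0, s)) (H (0, y)) y :=
      ((hH.comp (continuous_const.prodMk continuous_id)).integral_hasStrictDerivAt 0 y).hasDerivAt
    have hKH : ∫ t in 0..x, K (t, y) = H (x, y) - H (0, y) :=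
      integral_eq_sub_of_hasDerivAt (fun t _ => hHK t y)
        ((hK.comp (continuous_id.prodMk continuous_const)).intervalIntegrable ..)
    have h := (hH₀.const_add (∫ t in 0..x, G (t, 0))).add
      (hasDerivAt_integral_integral (hK.comp continuous_swap) 0 0 y x)
    simp only [Function.comp_apply, Prod.swap_prod_mk,
      ← intervalIntegral_intervalIntegral_swap_of_continuous hK, hKH] at h
    rwa [add_sub_cancel] at h
  refine ⟨F, fun p => (hasStrictFDerivAt_uncurry_coprod (f := fun x y => F (x, y))
    (f₁ := fun x y => toSpanSingleton ℝ (G (x, y)))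
    (f₂ := fun x y => toSpanSingleton ℝ (H (x, y)))
    (.of_forall fun q => hFx q.1 q.2) (.of_forall fun q => hFy q.1 q.2) ?_ ?_).hasFDerivAt⟩
  · exact (toSpanSingletonCLE.continuous.comp hG).continuousAt
  · exact (toSpanSingletonCLE.continuous.comp hH).continuousAt

theorem HasFDerivAt.fderiv_apply_one_zero_and_zero_one {F : ℝ × ℝ → E}
    {a b : E} {p : ℝ × ℝ}
    (hF : HasFDerivAt F ((toSpanSingleton ℝ a).coprod (toSpanSingleton ℝ b)) p) :
    fderiv ℝ F p (1, 0) = a ∧ fderiv ℝ F p (0, 1) = b := by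
  simp [hF.fderiv]

end Primitive

theorem Fokas_Gelfand_immersion_general {N : ℕ}
    (U1 U2 A B Phi : ℝ × ℝ → Matrix (Fin N) (Fin N) ℂ)
    (hU2 : ContDiff ℝ 1 U2)
    (hA : ContDiff ℝ 1 A) (hB : ContDiff ℝ 1 B)
    (hPhi : ContDiff ℝ 1 Phi)
    (hinv : ∀ p, IsUnit (Phi p))
    (hlsp1 : ∀ p, fderiv ℝ Phi p (1, 0) = U1 p * Phi p)
    (hlsp2 : ∀ p, fderiv ℝ Phi p (0, 1) = U2 p * Phi p)
    (hGMC : ∀ p, fderiv ℝ A p (0, 1) - fderiv ℝ B p (1, 0)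
      + (A p * U2 p - U2 p * A p) + (U1 p * B p - B p * U1 p) = 0) :
    (∀ p, fderiv ℝ (fun q => (Phi q)⁻¹ * A q * Phi q) p (0, 1)
        = fderiv ℝ (fun q => (Phi q)⁻¹ * B q * Phi q) p (1, 0))
    ∧ ∃ F : ℝ × ℝ → Matrix (Fin N) (Fin N) ℂ,
        ∀ p, fderiv ℝ F p (1, 0) = (Phi p)⁻¹ * A p * Phi p
          ∧ fderiv ℝ F p (0, 1) = (Phi p)⁻¹ * B p * Phi p := by
  have hΦ := hPhi.differentiable one_ne_zero
  have hAd := hA.differentiable one_ne_zero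
  have hBd := hB.differentiable one_ne_zero
  have hΨ : Differentiable ℝ fun q => (Phi q)⁻¹ := fun q => (hΦ q).matrix_inv (hinv q)
  have hG : Differentiable ℝ fun q => (Phi q)⁻¹ * A q * Phi q := fun q =>
    ((hΨ q).matrix_mul (hAd q)).matrix_mul (hΦ q)
  have hH : Differentiable ℝ fun q => (Phi q)⁻¹ * B q * Phi q := fun q =>
    ((hΨ q).matrix_mul (hBd q)).matrix_mul (hΦ q)
  set K := fun q => (Phi q)⁻¹ * (fderiv ℝ A q (0, 1) + (A q * U2 q - U2 q * A q)) * Phi q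
  have hGK q : fderiv ℝ (fun q => (Phi q)⁻¹ * A q * Phi q) q (0, 1) = K q :=
    fderiv_matrix_conj_apply (hΦ q) (hinv q) (hAd q) (hlsp2 q)
  have hHK q : fderiv ℝ (fun q => (Phi q)⁻¹ * B q * Phi q) q (1, 0) = K q := by
    rw [fderiv_matrix_conj_apply (hΦ q) (hinv q) (hBd q) (hlsp1 q)]
    congr 2
    rw [← sub_eq_zero, ← neg_eq_zero, ← hGMC q]
    abel
  refine ⟨fun p => (hGK p).trans (hHK p).symm, ?_⟩
  have hA' : Continuous fun q => fderiv ℝ A q (0, 1) :=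
    (hA.continuous_fderiv one_ne_zero).clm_apply continuous_const
  have hK : Continuous K := by
    have hΨc := hΨ.continuous
    fun_prop
  obtain ⟨F, hF⟩ := exists_hasFDerivAt_of_mixed_partials hG.continuous hH.continuous hK
    (fun x y => hGK (x, y) ▸ (hG (x, y)).hasDerivAt_comp_prodMk_right)
    (fun x y => hHK (x, y) ▸ (hH (x, y)).hasDerivAt_comp_prodMk_left)
  exact ⟨F, fun p => (hF p).fderiv_apply_one_zero_and_zero_one⟩

/-- If `Φ` is invertible and solves the linear spectral problem `∂₁Φ = U¹·Φ`, `∂₂Φ = U²·Φ`,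
and `A`, `B` satisfy the Gauss–Mainardi–Codazzi equations
`∂₂A − ∂₁B + [A, U²] + [U¹, B] = 0`, then the 1-form `(Φ⁻¹AΦ)dξ₁ + (Φ⁻¹BΦ)dξ₂` is closed and
there exists a Fokas–Gel'fand immersion `F` with `∂₁F = Φ⁻¹AΦ` and `∂₂F = Φ⁻¹BΦ`. -/
theorem Fokas_Gelfand_immersion {N : ℕ}
    (U1 U2 A B Phi : ℝ × ℝ → Matrix (Fin N) (Fin N) ℂ)
    (hU1 : ContDiff ℝ 1 U1) (hU2 : ContDiff ℝ 1 U2)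
    (hA : ContDiff ℝ 1 A) (hB : ContDiff ℝ 1 B)
    (hPhi : ContDiff ℝ 1 Phi)
    (hinv : ∀ p, IsUnit (Phi p))
    (hlsp1 : ∀ p, fderiv ℝ Phi p (1, 0) = U1 p * Phi p)
    (hlsp2 : ∀ p, fderiv ℝ Phi p (0, 1) = U2 p * Phi p)
    (hGMC : ∀ p, fderiv ℝ A p (0, 1) - fderiv ℝ B p (1, 0)
      + (A p * U2 p - U2 p * A p) + (U1 p * B p - B p * U1 p) = 0) :
    (∀ p, fderiv ℝ (fun q => (Phi q)⁻¹ * A q * Phi q) p (0, 1)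
        = fderiv ℝ (fun q => (Phi q)⁻¹ * B q * Phi q) p (1, 0))
    ∧ ∃ F : ℝ × ℝ → Matrix (Fin N) (Fin N) ℂ,
        ∀ p, fderiv ℝ F p (1, 0) = (Phi p)⁻¹ * A p * Phi p
          ∧ fderiv ℝ F p (0, 1) = (Phi p)⁻¹ * B p * Phi p :=
  Fokas_Gelfand_immersion_general U1 U2 A B Phi hU2 hA hB hPhi hinv hlsp1 hlsp2 hGMC
end
end
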